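/- (Lower bound on weighted Catalan numbers via level-2 paths) Fix sequences λ with λ_i > 0 and ρ with ρ_i ≥ 0. Then for every integer k ≥ 2, q_2^{(k)} · λ_1/((1+λ_1+D_1)(1+λ_2+D_2)^2) ≤ C_k, where C_k is the weighted Catalan number. -/

import Mathlib

open Filter Finset

/-- Final height of a `±1` path started at height `j`; `true` is a rise step,
`false` is a fall step. -/
def endH : ℕ → List Bool → ℕ
  | j, [] => j
  | j, true :: s => endH (j + 1) s
  | j, false :: s => endH (j - 1) s

/-- `isDyck j s` holds when the path `s` started at height `j` never goes below height 0
(every fall step occurs from height ≥ 1). -/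
def isDyck : ℕ → List Bool → Bool
  | _, [] => true
  | j, true :: s => isDyck (j + 1) s
  | j, false :: s => decide (1 ≤ j) && isDyck (j - 1) s

/-- `isJump j s` holds when the path `s` started at height `j` stays at height ≥ 1
(every fall step occurs from height ≥ 2). -/
def isJump : ℕ → List Bool → Bool
  | _, [] => true
  | j, true :: s => isJump (j + 1) s
  | j, false :: s => decide (2 ≤ j) && isJump (j - 1) s

/-- Weight of a lattice path: a rise step from height `j` has weight `u j`, a fall step
from height `j+1` to `j` has weight `v j`. -/
noncomputable def dwt (u v : ℕ → ℝ) : ℕ → List Bool → ℝ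
  | _, [] => 1
  | j, true :: s => u j * dwt u v (j + 1) s
  | j, false :: s => v (j - 1) * dwt u v (j - 1) s

/-- Weight `p(γ)` of a jump-chain path: an up-step from height `j` has weight
`λ_j/(1+λ_j+D_j)`, a down-step from height `j` has weight `1/(1+λ_j+D_j)`. -/
noncomputable def jwt (lam Dd : ℕ → ℝ) : ℕ → List Bool → ℝ
  | _, [] => 1
  | j, true :: s => lam j / (1 + lam j + Dd j) * jwt lam Dd (j + 1) s
  | j, false :: s => 1 / (1 + lam j + Dd j) * jwt lam Dd (j - 1) s

/-- `D_j = Σ_{i=1}^j ρ_i`. -/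
noncomputable def Dd (rho : ℕ → ℝ) (j : ℕ) : ℝ := ∑ i ∈ Finset.Icc 1 j, rho i

/-- `u(j) = λ_{j+1}/(1+λ_{j+1}+D_{j+1})`. -/
noncomputable def uWt (lam rho : ℕ → ℝ) (j : ℕ) : ℝ :=
  lam (j + 1) / (1 + lam (j + 1) + Dd rho (j + 1))

/-- `v(j) = 1/(1+λ_{j+2}+D_{j+2})`. -/
noncomputable def vWt (lam rho : ℕ → ℝ) (j : ℕ) : ℝ :=
  1 / (1 + lam (j + 2) + Dd rho (j + 2))

/-- The weighted Catalan number `C_k`: the sum of `ω(γ)` over all Dyck paths `γ` of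
length `2k` (paths of `k` rise and `k` fall steps from height 0 staying at height ≥ 0). -/
noncomputable def Ck (lam rho : ℕ → ℝ) (k : ℕ) : ℝ :=
  ∑ γ : Fin (2 * k) → Bool,
    if isDyck 0 (List.ofFn γ) = true ∧ endH 0 (List.ofFn γ) = 0 then
      dwt (uWt lam rho) (vWt lam rho) 0 (List.ofFn γ)
    else 0

/-- The power series `Σ_k C_k z^k` as a formal multilinear series over `ℂ`. -/
noncomputable def gSeries (lam rho : ℕ → ℝ) : FormalMultilinearSeries ℂ ℂ ℂ :=
  fun n => FormalMultilinearSeries.ofScalars ℂ (fun k => (Ck lam rho k : ℂ)) n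

/-- `M`, the radius of convergence of `g(z) = Σ_k C_k z^k`. -/
noncomputable def radiusM (lam rho : ℕ → ℝ) : ENNReal := (gSeries lam rho).radius

/-- `σ(ℓ) = ∏_{n=1}^ℓ 1/(1+D_n)`. -/
noncomputable def sigmaWt (rho : ℕ → ℝ) (l : ℕ) : ℝ :=
  ∏ n ∈ Finset.Icc 1 l, 1 / (1 + Dd rho n)

/-- `q_ℓ^{(k)} = Σ_{γ ∈ Γ_ℓ^{(k)}} p(γ) σ(ℓ)`, where `Γ_ℓ^{(k)}` is the set of jump-chain
paths of length `2k − ℓ − 1` that start at height 1, stay at height ≥ 1, and whose final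
step is an up-step ending at height `ℓ`. -/
noncomputable def qsum (lam rho : ℕ → ℝ) (k l : ℕ) : ℝ :=
  (∑ γ : Fin (2 * k - l - 1) → Bool,
    if isJump 1 (List.ofFn γ) = true ∧ endH 1 (List.ofFn γ) = l ∧
        (List.ofFn γ).getLast? = some true then
      jwt lam (Dd rho) 1 (List.ofFn γ)
    else 0) * sigmaWt rho l

/-- `Γ_ℓ^{(k)}`, as a set of step lists. -/
def Gamma (k l : ℕ) : Set (List Bool) :=
  {s | s.length = 2 * k - l - 1 ∧ isJump 1 s = true ∧ endH 1 s = l ∧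
    s.getLast? = some true}

/-- The path modification `γ ↦ γ̃`: insert `ℓ − 2` consecutive down-steps immediately
before the final (upward) step. -/
def tilde (l : ℕ) (s : List Bool) : List Bool :=
  s.dropLast ++ List.replicate (l - 2) false ++ [true]

/-! Every `γ ∈ Γ₂^{(k)}` stays at height `≥ 1` and ends at height `2`; lowered by one level it
becomes a Dyck prefix from `0` to `1` whose weight is again `p(γ)`, because `u(j)` and `v(j)` are
the jump-chain weights at height `j + 1`. Appending the three steps `↓↑↓` closes it to a Dyck
path of length `2k` and multiplies its weight by `v(0) u(0) v(0)`, which is the factor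
`λ₁/((1+λ₁+D₁)(1+λ₂+D₂)²)`. Since `σ(2) ≤ 1`, distinct paths give distinct Dyck paths and all
weights are nonnegative, summing yields the bound. -/

theorem sum_ofFn_le_sum_ofFn_append {α M : Type*} [Fintype α] [AddCommMonoid M]
    [PartialOrder M] [IsOrderedAddMonoid M] {n m : ℕ} (t : List α) (hm : n + t.length = m)
    {f : (Fin n → α) → M} {g : List α → M} (hg : ∀ s, 0 ≤ g s)
    (hfg : ∀ γ, f γ ≤ g (List.ofFn γ ++ t)) :
    ∑ γ : Fin n → α, f γ ≤ ∑ δ : Fin m → α, g (List.ofFn δ) := by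
  subst hm
  classical
  let extend : (Fin n → α) → Fin (n + t.length) → α := fun γ => Fin.append γ t.get
  have hextend : ∀ γ, List.ofFn (extend γ) = List.ofFn γ ++ t := fun γ => by
    simp [extend, List.ofFn_fin_append]
  have hinj : Function.Injective extend := fun a b hab =>
    List.ofFn_injective (List.append_cancel_right (by rw [← hextend, ← hextend, hab]))
  calc ∑ γ : Fin n → α, f γ
      ≤ ∑ γ : Fin n → α, g (List.ofFn (extend γ)) :=
        Finset.sum_le_sum fun γ _ => hextend γ ▸ hfg γ
    _ = ∑ δ ∈ Finset.univ.image extend, g (List.ofFn δ) :=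
        (Finset.sum_image (f := fun δ => g (List.ofFn δ)) fun a _ b _ h => hinj h).symm
    _ ≤ ∑ δ : Fin (n + t.length) → α, g (List.ofFn δ) :=
        Finset.sum_le_sum_of_subset_of_nonneg (Finset.subset_univ _) fun δ _ _ => hg _

theorem endH_append (s t : List Bool) (j : ℕ) : endH j (s ++ t) = endH (endH j s) t := by
  induction s generalizing j with
  | nil => rfl
  | cons b s ih => cases b <;> simp [endH, ih]

theorem isDyck_append (s t : List Bool) (j : ℕ) :
    isDyck j (s ++ t) = (isDyck j s && isDyck (endH j s) t) := by
  induction s generalizing j with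
  | nil => simp [isDyck, endH]
  | cons b s ih => cases b <;> simp [isDyck, endH, ih, Bool.and_assoc]

theorem dwt_append (u v : ℕ → ℝ) (s t : List Bool) (j : ℕ) :
    dwt u v j (s ++ t) = dwt u v j s * dwt u v (endH j s) t := by
  induction s generalizing j with
  | nil => simp [dwt, endH]
  | cons b s ih => cases b <;> simp [dwt, endH, ih, mul_assoc]

theorem dwt_nonneg {u v : ℕ → ℝ} (hu : ∀ j, 0 ≤ u j) (hv : ∀ j, 0 ≤ v j) (j : ℕ)
    (s : List Bool) : 0 ≤ dwt u v j s := by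
  induction s generalizing j with
  | nil => exact zero_le_one
  | cons b s ih =>
    cases b
    · exact mul_nonneg (hv _) (ih _)
    · exact mul_nonneg (hu _) (ih _)

theorem isDyck_of_isJump_succ {s : List Bool} {j : ℕ} (h : isJump (j + 1) s = true) :
    isDyck j s = true := by
  induction s generalizing j with
  | nil => rfl
  | cons b s ih =>
    cases b
    · obtain ⟨hj, hs⟩ : 2 ≤ j + 1 ∧ isJump j s = true := by simpa [isJump] using h
      obtain ⟨i, rfl⟩ : ∃ i, j = i + 1 := ⟨j - 1, by omega⟩
      simpa [isDyck] using ih hs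
    · exact ih h

theorem endH_succ_of_isJump {s : List Bool} {j : ℕ} (h : isJump (j + 1) s = true) :
    endH (j + 1) s = endH j s + 1 := by
  induction s generalizing j with
  | nil => rfl
  | cons b s ih =>
    cases b
    · obtain ⟨hj, hs⟩ : 2 ≤ j + 1 ∧ isJump j s = true := by simpa [isJump] using h
      obtain ⟨i, rfl⟩ : ∃ i, j = i + 1 := ⟨j - 1, by omega⟩
      simpa [endH] using ih hs
    · exact ih h

theorem dwt_eq_jwt_of_isJump (lam rho : ℕ → ℝ) {s : List Bool} {j : ℕ}
    (h : isJump (j + 1) s = true) :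
    dwt (uWt lam rho) (vWt lam rho) j s = jwt lam (Dd rho) (j + 1) s := by
  induction s generalizing j with
  | nil => rfl
  | cons b s ih =>
    cases b
    · obtain ⟨hj, hs⟩ : 2 ≤ j + 1 ∧ isJump j s = true := by simpa [isJump] using h
      obtain ⟨i, rfl⟩ : ∃ i, j = i + 1 := ⟨j - 1, by omega⟩
      simp [dwt, jwt, vWt, ih hs]
    · simp [dwt, jwt, uWt, ih h]

section Weights

variable {lam rho : ℕ → ℝ}

theorem Dd_nonneg (hrho : ∀ i, 1 ≤ i → 0 ≤ rho i) (j : ℕ) : 0 ≤ Dd rho j :=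
  Finset.sum_nonneg fun i hi => hrho i (Finset.mem_Icc.mp hi).1

theorem uWt_nonneg (hlam : ∀ i, 1 ≤ i → 0 ≤ lam i) (hrho : ∀ i, 1 ≤ i → 0 ≤ rho i) (j : ℕ) :
    0 ≤ uWt lam rho j := by
  have := hlam (j + 1) (by omega)
  have := Dd_nonneg hrho (j + 1)
  unfold uWt
  positivity

theorem vWt_nonneg (hlam : ∀ i, 1 ≤ i → 0 ≤ lam i) (hrho : ∀ i, 1 ≤ i → 0 ≤ rho i) (j : ℕ) :
    0 ≤ vWt lam rho j := by
  have := hlam (j + 2) (by omega)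
  have := Dd_nonneg hrho (j + 2)
  unfold vWt
  positivity

theorem sigmaWt_le_one (hrho : ∀ i, 1 ≤ i → 0 ≤ rho i) (l : ℕ) : sigmaWt rho l ≤ 1 := by
  refine Finset.prod_le_one (fun n _ => ?_) fun n _ => ?_ <;> have := Dd_nonneg hrho n
  · positivity
  · rw [div_le_one (by linarith)]
    linarith

end Weights

theorem dwt_peak (lam rho : ℕ → ℝ) :
    dwt (uWt lam rho) (vWt lam rho) 1 [false, true, false] =
      lam 1 / ((1 + lam 1 + Dd rho 1) * (1 + lam 2 + Dd rho 2) ^ 2) := by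
  change 1 / (1 + lam 2 + Dd rho 2) * (lam 1 / (1 + lam 1 + Dd rho 1) *
    (1 / (1 + lam 2 + Dd rho 2) * 1)) = _
  generalize 1 + lam 1 + Dd rho 1 = a
  generalize 1 + lam 2 + Dd rho 2 = b
  ring

theorem append_peak_of_level_two (lam rho : ℕ → ℝ) {s : List Bool} (hjump : isJump 1 s = true)
    (hend : endH 1 s = 2) :
    isDyck 0 (s ++ [false, true, false]) = true ∧ endH 0 (s ++ [false, true, false]) = 0 ∧
      dwt (uWt lam rho) (vWt lam rho) 0 (s ++ [false, true, false]) =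
        jwt lam (Dd rho) 1 s * (lam 1 / ((1 + lam 1 + Dd rho 1) * (1 + lam 2 + Dd rho 2) ^ 2)) := by
  have hend₀ : endH 0 s = 1 := by
    have : endH 1 s = endH 0 s + 1 := endH_succ_of_isJump hjump
    omega
  refine ⟨?_, ?_, ?_⟩
  · rw [isDyck_append, isDyck_of_isJump_succ hjump, hend₀]
    rfl
  · rw [endH_append, hend₀]
    rfl
  · rw [dwt_append, hend₀, dwt_peak, dwt_eq_jwt_of_isJump lam rho hjump]

/-- **Lower bound on weighted Catalan numbers via level-2 paths.** For `k ≥ 2`,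
`q_2^{(k)} · λ₁/((1+λ₁+D₁)(1+λ₂+D₂)²) ≤ C_k`. -/
theorem q2_le_catalan (lam rho : ℕ → ℝ)
    (hlam : ∀ i, 1 ≤ i → 0 < lam i) (hrho : ∀ i, 1 ≤ i → 0 ≤ rho i)
    (k : ℕ) (hk : 2 ≤ k) :
    qsum lam rho k 2 *
        (lam 1 / ((1 + lam 1 + Dd rho 1) * (1 + lam 2 + Dd rho 2) ^ 2)) ≤
      Ck lam rho k := by
  have hu := uWt_nonneg (fun i hi => (hlam i hi).le) hrho
  have hv := vWt_nonneg (fun i hi => (hlam i hi).le) hrho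
  have hg (δ : List Bool) : 0 ≤ if isDyck 0 δ = true ∧ endH 0 δ = 0 then
      dwt (uWt lam rho) (vWt lam rho) 0 δ else 0 := by
    split_ifs
    exacts [dwt_nonneg hu hv _ _, le_rfl]
  rw [qsum, mul_assoc, Finset.sum_mul, Ck]
  refine sum_ofFn_le_sum_ofFn_append [false, true, false] ?_ hg fun γ => ?_
  · simp only [List.length_cons, List.length_nil]
    omega
  by_cases hΓ : isJump 1 (List.ofFn γ) = true ∧ endH 1 (List.ofFn γ) = 2
  · obtain ⟨hdyck, hend, hwt⟩ := append_peak_of_level_two lam rho hΓ.1 hΓ.2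
    have hnonneg := dwt_nonneg hu hv 0 (List.ofFn γ ++ [false, true, false])
    rw [hwt] at hnonneg
    simp only [hdyck, hend, and_self, if_true]
    rw [hwt, ite_mul, zero_mul]
    split_ifs
    · rw [mul_left_comm]
      exact mul_le_of_le_one_left hnonneg (sigmaWt_le_one hrho 2)
    · exact hnonneg
  · rw [if_neg fun h => hΓ ⟨h.1, h.2.1⟩, zero_mul]
    exact hg _
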